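/- For every pair of integers q > r ≥ 1, there exists a real number α ∈ [0,1] such that log₂(f_{q,r}(N)) / log₂(N) tends to α as N → ∞; that is, f_{q,r}(N) = N^{α + o(1)}. -/

import Mathlib

/-- A monotone path of length `ℓ` (number of vertices) in the `q`-edge-colored complete
graph on `[N]` given by `χ`, all of whose edge colors lie in `S`. -/
def HasMonoPath (q N : ℕ) (χ : Fin N → Fin N → Fin q) (S : Finset (Fin q)) (ℓ : ℕ) : Prop :=
  ∃ v : Fin ℓ → Fin N, StrictMono v ∧
    ∀ i j : Fin ℓ, (i : ℕ) + 1 = (j : ℕ) → χ (v i) (v j) ∈ S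

/-- The maximum length of a monotone path using at most `r` colors in the coloring `χ`. -/
noncomputable def maxMonoLen (q r N : ℕ) (χ : Fin N → Fin N → Fin q) : ℕ :=
  sSup {ℓ : ℕ | ∃ S : Finset (Fin q), S.card ≤ r ∧ HasMonoPath q N χ S ℓ}

/-- `fqr q r N` : the minimum over `q`-edge-colorings of the complete graph on `[N]` of the
maximum length of a monotone path using at most `r` colors. -/
noncomputable def fqr (q r N : ℕ) : ℕ :=
  sInf {L : ℕ | ∃ χ : Fin N → Fin N → Fin q, L = maxMonoLen q r N χ}

/-!
Write `f = f_{q,r}`. Color `[M * N]` lexicographically: `M` consecutive blocks of size `N`, edges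
inside a block colored by an optimal coloring of `[N]`, edges between blocks by one of `[M]`.
For a color set `S`, label each vertex of a factor by the length of the longest `S`-path starting
there; these labels strictly decrease along `S`-edges and take fewer than `f(M)` (resp. `f(N)`)
values, so combining them lexicographically bounds every `S`-path of the product by `f(M) f(N)`.
Hence `f` is submultiplicative; it is also monotone, so Fekete's lemma applied to
`k ↦ log₂ f(2 ^ k)` gives the limit exponent, and `1 ≤ f(N) ≤ N` puts it in `[0, 1]`.
-/

open Filter Real

section MonotonePaths

variable {q r N : ℕ} {χ : Fin N → Fin N → Fin q} {S : Finset (Fin q)} {ℓ : ℕ}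

lemma HasMonoPath.le (h : HasMonoPath q N χ S ℓ) : ℓ ≤ N := by
  obtain ⟨v, hv, -⟩ := h
  simpa using Fintype.card_le_of_injective v hv.injective

lemma le_maxMonoLen (hS : S.card ≤ r) (h : HasMonoPath q N χ S ℓ) : ℓ ≤ maxMonoLen q r N χ :=
  le_csSup ⟨N, fun _ ⟨_, _, h⟩ => h.le⟩ ⟨S, hS, h⟩

lemma maxMonoLen_le_self (χ : Fin N → Fin N → Fin q) : maxMonoLen q r N χ ≤ N :=
  csSup_le' fun _ ⟨_, _, h⟩ => h.le

lemma one_le_maxMonoLen (hN : 0 < N) (χ : Fin N → Fin N → Fin q) : 1 ≤ maxMonoLen q r N χ :=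
  le_maxMonoLen (S := ∅) (Nat.zero_le r) ⟨fun _ => ⟨0, hN⟩, Subsingleton.strictMono _, by omega⟩

def MonoStep (χ : Fin N → Fin N → Fin q) (S : Finset (Fin q)) (x y : Fin N) : Prop :=
  x < y ∧ χ x y ∈ S

lemma hasMonoPath_of_isChain {l : List (Fin N)} (hl : l.IsChain (MonoStep χ S)) :
    HasMonoPath q N χ S l.length := by
  refine ⟨fun i => l[i], fun i j hij => ?_, fun ⟨i, _⟩ ⟨j, hj⟩ hij => ?_⟩
  · exact List.pairwise_iff_getElem.1 (hl.imp fun _ _ h => h.1).pairwise i j i.2 j.2 hij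
  · subst hij
    exact (List.isChain_iff_getElem.1 hl i hj).2

lemma HasMonoPath.le_of_strictAnti_label {φ : Fin N → ℕ} {L : ℕ} (hφL : ∀ x, φ x < L)
    (hφ : ∀ x y, MonoStep χ S x y → φ y < φ x) (h : HasMonoPath q N χ S ℓ) : ℓ ≤ L := by
  obtain ⟨v, hv, hc⟩ := h
  cases ℓ with
  | zero => exact Nat.zero_le L
  | succ n =>
    have hanti : StrictAnti (φ ∘ v) := Fin.strictAnti_iff_succ_lt.2 fun i =>
      hφ _ _ ⟨hv i.castSucc_lt_succ, hc _ _ rfl⟩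
    simpa using Finset.card_le_card_of_injOn (φ ∘ v) (s := Finset.univ) (t := Finset.range L)
      (fun i _ => Finset.mem_range.2 (hφL _)) hanti.injective.injOn

noncomputable def monoHeight (χ : Fin N → Fin N → Fin q) (S : Finset (Fin q)) (x : Fin N) : ℕ :=
  sSup {n | ∃ l : List (Fin N), l.length = n ∧ (x :: l).IsChain (MonoStep χ S)}

lemma bddAbove_monoHeight_set (x : Fin N) :
    BddAbove {n | ∃ l : List (Fin N), l.length = n ∧ (x :: l).IsChain (MonoStep χ S)} :=
  ⟨N, fun _ ⟨_, hl, h⟩ => hl ▸ Nat.le_of_succ_le (hasMonoPath_of_isChain h).le⟩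

lemma exists_isChain_length_monoHeight (x : Fin N) :
    ∃ l : List (Fin N), l.length = monoHeight χ S x ∧ (x :: l).IsChain (MonoStep χ S) :=
  Nat.sSup_mem (by exact ⟨0, [], rfl, List.isChain_singleton x⟩) (bddAbove_monoHeight_set x)

lemma monoHeight_lt_maxMonoLen (hS : S.card ≤ r) (x : Fin N) :
    monoHeight χ S x < maxMonoLen q r N χ := by
  obtain ⟨l, hl, h⟩ := exists_isChain_length_monoHeight (χ := χ) (S := S) x
  simpa [hl] using le_maxMonoLen hS (hasMonoPath_of_isChain h)

lemma monoHeight_lt_of_monoStep {x y : Fin N} (h : MonoStep χ S x y) :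
    monoHeight χ S y < monoHeight χ S x := by
  obtain ⟨l, hl, hy⟩ := exists_isChain_length_monoHeight (χ := χ) (S := S) y
  exact le_csSup (bddAbove_monoHeight_set x)
    (by exact ⟨y :: l, by simp [hl], List.isChain_cons_cons.2 ⟨h, hy⟩⟩)

def prodColoring {M : ℕ} (χM : Fin M → Fin M → Fin q) (χN : Fin N → Fin N → Fin q) :
    Fin (M * N) → Fin (M * N) → Fin q :=
  fun k k' => if k.divNat = k'.divNat then χN k.modNat k'.modNat else χM k.divNat k'.divNat

lemma Fin.divNat_mono {M : ℕ} {k k' : Fin (M * N)} (h : k ≤ k') : k.divNat ≤ k'.divNat :=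
  Nat.div_le_div_right h

lemma Fin.modNat_lt_of_divNat_eq {M : ℕ} {k k' : Fin (M * N)} (h : k < k')
    (hdiv : k.divNat = k'.divNat) : k.modNat < k'.modNat := by
  have hk := Nat.div_add_mod k N
  have hk' := Nat.div_add_mod k' N
  rw [Fin.ext_iff, Fin.coe_divNat, Fin.coe_divNat] at hdiv
  rw [Fin.lt_def] at h ⊢
  simp only [Fin.coe_modNat]
  rw [hdiv] at hk
  omega

lemma maxMonoLen_prodColoring_le {M : ℕ} (χM : Fin M → Fin M → Fin q) (χN : Fin N → Fin N → Fin q) :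
    maxMonoLen q r (M * N) (prodColoring χM χN) ≤ maxMonoLen q r M χM * maxMonoLen q r N χN := by
  set a := maxMonoLen q r M χM
  set b := maxMonoLen q r N χN
  refine csSup_le' ?_
  rintro ℓ ⟨S, hS, hpath⟩
  have hMa : ∀ x, monoHeight χM S x < a := monoHeight_lt_maxMonoLen hS
  have hNb : ∀ y, monoHeight χN S y < b := monoHeight_lt_maxMonoLen hS
  refine hpath.le_of_strictAnti_label
    (φ := fun k => monoHeight χM S k.divNat * b + monoHeight χN S k.modNat)
    (fun k => by nlinarith [hMa k.divNat, hNb k.modNat]) ?_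
  rintro k k' ⟨hlt, hcol⟩
  by_cases hdiv : k.divNat = k'.divNat
  · have hstep : MonoStep χN S k.modNat k'.modNat :=
      ⟨Fin.modNat_lt_of_divNat_eq hlt hdiv, by simpa [prodColoring, hdiv] using hcol⟩
    have := monoHeight_lt_of_monoStep hstep
    rw [hdiv]
    omega
  · have hstep : MonoStep χM S k.divNat k'.divNat :=
      ⟨lt_of_le_of_ne (Fin.divNat_mono hlt.le) hdiv, by simpa [prodColoring, hdiv] using hcol⟩
    have := monoHeight_lt_of_monoStep hstep
    nlinarith [hNb k'.modNat]

lemma maxMonoLen_restrict_le {N' : ℕ} (h : N ≤ N') (χ : Fin N' → Fin N' → Fin q) :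
    maxMonoLen q r N (fun i j => χ (Fin.castLE h i) (Fin.castLE h j)) ≤ maxMonoLen q r N' χ := by
  refine csSup_le' ?_
  rintro ℓ ⟨S, hS, v, hv, hc⟩
  exact le_maxMonoLen hS ⟨Fin.castLE h ∘ v, (Fin.strictMono_castLE h).comp hv, hc⟩

lemma exists_fqr_eq (hq : 0 < q) (r N : ℕ) :
    ∃ χ : Fin N → Fin N → Fin q, fqr q r N = maxMonoLen q r N χ :=
  Nat.sInf_mem (s := {L | ∃ χ : Fin N → Fin N → Fin q, L = maxMonoLen q r N χ})
    ⟨_, fun _ _ => ⟨0, hq⟩, rfl⟩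

lemma fqr_le_maxMonoLen (χ : Fin N → Fin N → Fin q) : fqr q r N ≤ maxMonoLen q r N χ :=
  Nat.sInf_le ⟨χ, rfl⟩

lemma fqr_le_self (hq : 0 < q) (r N : ℕ) : fqr q r N ≤ N := by
  obtain ⟨χ, hχ⟩ := exists_fqr_eq hq r N
  exact hχ ▸ maxMonoLen_le_self χ

lemma fqr_pos (hq : 0 < q) (r : ℕ) (hN : 0 < N) : 0 < fqr q r N := by
  obtain ⟨χ, hχ⟩ := exists_fqr_eq hq r N
  exact hχ ▸ one_le_maxMonoLen hN χ

lemma fqr_mono (hq : 0 < q) (r : ℕ) : Monotone (fqr q r) := by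
  intro N N' h
  obtain ⟨χ, hχ⟩ := exists_fqr_eq hq r N'
  exact hχ ▸ (fqr_le_maxMonoLen _).trans (maxMonoLen_restrict_le h χ)

lemma fqr_mul_le (hq : 0 < q) (r M N : ℕ) : fqr q r (M * N) ≤ fqr q r M * fqr q r N := by
  obtain ⟨χM, hχM⟩ := exists_fqr_eq hq r M
  obtain ⟨χN, hχN⟩ := exists_fqr_eq hq r N
  rw [hχM, hχN]
  exact (fqr_le_maxMonoLen _).trans (maxMonoLen_prodColoring_le χM χN)

end MonotonePaths

lemma Nat.tendsto_log_atTop {b : ℕ} (hb : 1 < b) : Tendsto (Nat.log b) atTop atTop :=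
  tendsto_atTop_atTop.2 fun k => ⟨b ^ k, fun _ hN => Nat.le_log_of_pow_le hb hN⟩

lemma logb_natCast_lt_natLog_add_one (b n : ℕ) : logb b n < Nat.log b n + 1 := by
  have hfloor : ⌊logb b (n : ℝ)⌋₊ = Nat.log b n := natFloor_logb_natCast b n
  exact hfloor ▸ Nat.lt_floor_add_one _

lemma tendsto_div_add_one_of_tendsto_div {u : ℕ → ℝ} {α : ℝ}
    (h : Tendsto (fun k => u k / k) atTop (nhds α)) :
    Tendsto (fun k : ℕ => u k / (k + 1)) atTop (nhds α) := by
  have := h.mul (tendsto_natCast_div_add_atTop (1 : ℝ))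
  rw [mul_one] at this
  refine this.congr' ?_
  filter_upwards [eventually_ne_atTop 0] with k hk
  field_simp

lemma tendsto_succ_div_of_tendsto_div {u : ℕ → ℝ} {α : ℝ}
    (h : Tendsto (fun k => u k / k) atTop (nhds α)) :
    Tendsto (fun k : ℕ => u (k + 1) / k) atTop (nhds α) := by
  have := (h.comp (tendsto_add_atTop_nat 1)).mul
    ((tendsto_const_nhds (x := (1 : ℝ))).add tendsto_one_div_atTop_nhds_zero_nat)
  rw [add_zero, mul_one] at this
  refine this.congr' ?_
  filter_upwards [eventually_ne_atTop 0] with k hk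
  simp only [Function.comp_apply, Nat.cast_add, Nat.cast_one]
  field_simp

/-- Fekete's lemma for `k ↦ log₂ f(2 ^ k)`; monotonicity interpolates between consecutive powers
of two. -/
theorem exists_tendsto_logb_div_logb_of_submultiplicative {f : ℕ → ℕ} (hmono : Monotone f)
    (hmul : ∀ m n, f (m * n) ≤ f m * f n) (hpos : ∀ n, 0 < n → 0 < f n) :
    ∃ α : ℝ, Tendsto (fun N => logb 2 (f N) / logb 2 N) atTop (nhds α) := by
  have hlogf : ∀ m n, 0 < m → m ≤ n → logb 2 (f m) ≤ logb 2 (f n) := fun m n hm hmn =>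
    logb_le_logb_of_le one_lt_two (by exact_mod_cast hpos m hm) (by exact_mod_cast hmono hmn)
  set u : ℕ → ℝ := fun k => logb 2 (f (2 ^ k))
  have hu : ∀ k, 0 ≤ u k := fun k =>
    logb_nonneg one_lt_two (by exact_mod_cast hpos _ (by positivity))
  have hsub : Subadditive u := fun m n => by
    have hm := hpos (2 ^ m) (by positivity)
    have hn := hpos (2 ^ n) (by positivity)
    calc u (m + n) = logb 2 (f (2 ^ m * 2 ^ n)) := by rw [← pow_add]
      _ ≤ logb 2 ((f (2 ^ m) : ℝ) * f (2 ^ n)) :=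
          logb_le_logb_of_le one_lt_two (by exact_mod_cast hpos _ (by positivity))
            (by exact_mod_cast hmul _ _)
      _ = u m + u n := logb_mul (by positivity) (by positivity)
  set α := hsub.lim
  have hlim : Tendsto (fun k => u k / k) atTop (nhds α) :=
    hsub.tendsto_lim ⟨0, by rintro _ ⟨k, rfl⟩; exact div_nonneg (hu k) k.cast_nonneg⟩
  have hsandwich : ∀ N, 2 ≤ N →
      u (Nat.log 2 N) / (Nat.log 2 N + 1) ≤ logb 2 (f N) / logb 2 N ∧
        logb 2 (f N) / logb 2 N ≤ u (Nat.log 2 N + 1) / Nat.log 2 N := by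
    intro N hN
    set k := Nat.log 2 N
    have hk : (0 : ℝ) < k := Nat.cast_pos.2 (Nat.le_log_of_pow_le one_lt_two (by simpa using hN))
    have hlogN_ge : (k : ℝ) ≤ logb 2 N := by exact_mod_cast natLog_le_logb N 2
    have hlogN_lt : logb 2 N < k + 1 := by exact_mod_cast logb_natCast_lt_natLog_add_one 2 N
    have hkN : 2 ^ k ≤ N := Nat.pow_log_le_self 2 (by omega)
    have hNk : N < 2 ^ (k + 1) := Nat.lt_pow_succ_log_self one_lt_two N
    have hfN : 0 ≤ logb 2 (f N) := (hu 0).trans (hlogf 1 N one_pos (by omega))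
    exact ⟨div_le_div₀ hfN (hlogf _ _ (by positivity) hkN) (hk.trans_le hlogN_ge) hlogN_lt.le,
      div_le_div₀ (hu _) (hlogf _ _ (by omega) hNk.le) hk hlogN_ge⟩
  have hlog := Nat.tendsto_log_atTop one_lt_two
  exact ⟨α, tendsto_of_tendsto_of_tendsto_of_le_of_le'
    ((tendsto_div_add_one_of_tendsto_div hlim).comp hlog)
    ((tendsto_succ_div_of_tendsto_div hlim).comp hlog)
    ((eventually_ge_atTop 2).mono fun N hN => (hsandwich N hN).1)
    ((eventually_ge_atTop 2).mono fun N hN => (hsandwich N hN).2)⟩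

open Filter in
theorem stmt_11_general (q r : ℕ) (hq : r < q) :
    ∃ α : ℝ, α ∈ Set.Icc (0 : ℝ) 1 ∧
      Tendsto (fun N : ℕ => Real.logb 2 (fqr q r N) / Real.logb 2 N) atTop (nhds α) := by
  have hq0 : 0 < q := Nat.zero_lt_of_lt hq
  obtain ⟨α, hα⟩ := exists_tendsto_logb_div_logb_of_submultiplicative (fqr_mono hq0 r)
    (fqr_mul_le hq0 r) (fun _ => fqr_pos hq0 r)
  have hbounds : ∀ᶠ N : ℕ in atTop,
      0 ≤ logb 2 (fqr q r N) / logb 2 N ∧ logb 2 (fqr q r N) / logb 2 N ≤ 1 := by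
    filter_upwards [eventually_ge_atTop 1] with N hN
    have hf : (1 : ℝ) ≤ fqr q r N := by exact_mod_cast fqr_pos hq0 r hN
    have hfN : (fqr q r N : ℝ) ≤ N := by exact_mod_cast fqr_le_self hq0 r N
    have hlogN := logb_nonneg one_lt_two (hf.trans hfN)
    exact ⟨div_nonneg (logb_nonneg one_lt_two hf) hlogN,
      div_le_one_of_le₀ (logb_le_logb_of_le one_lt_two (by positivity) hfN) hlogN⟩
  exact ⟨α, ⟨ge_of_tendsto hα (hbounds.mono fun _ h => h.1),
    le_of_tendsto hα (hbounds.mono fun _ h => h.2)⟩, hα⟩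

open Filter in
/-- For every `q > r ≥ 1`, there is `α ∈ [0,1]` with `log₂ f_{q,r}(N) / log₂ N → α`
as `N → ∞`; that is, `f_{q,r}(N) = N^{α + o(1)}`. -/
theorem stmt_11 (q r : ℕ) (hr : 1 ≤ r) (hq : r < q) :
    ∃ α : ℝ, α ∈ Set.Icc (0 : ℝ) 1 ∧
      Tendsto (fun N : ℕ => Real.logb 2 (fqr q r N) / Real.logb 2 N) atTop (nhds α) :=
  stmt_11_general q r hq
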